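/- arXiv:1708.01756 — 6 statements merged into one kernel-verified Lean document; each statement's English description precedes it below -/
import Mathlib

section
/- Let λ, r₀, r₂ be positive real numbers and let u : ℝ → ℝ be twice differentiable. Suppose that sup_{t∈ℝ} u(t) < ∞ and that u''(t) ≥ (λ/r₀²)·u'(t)² − r₀·r₂ for all t ∈ ℝ. Then u'(t)² ≤ r₀³·r₂/λ for all t ∈ ℝ. -/
/-!
Write `v = u'`. If `α v(t)² > β ≥ 0` with `v(t) > 0`, then at every later time where `v` returns to
the level `v(t)` the differential inequality gives `v' ≥ α v(t)² - β > 0`, so `v` never drops below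
`v(t)` after `t`. Hence `u` grows at least linearly, contradicting its boundedness from above.
The case `v(t) < 0` is the same argument for `s ↦ u (-s)`.
-/

open Set Filter

theorem le_of_deriv_pos_of_eq {v : ℝ → ℝ} {a M : ℝ} (hv : Differentiable ℝ v) (ha : M ≤ v a)
    (hpos : ∀ x, a ≤ x → v x = M → 0 < deriv v x) {x : ℝ} (hx : a ≤ x) : M ≤ v x :=
  image_le_of_deriv_right_lt_deriv_boundary (f := fun _ => M) (f' := fun _ => 0)
    continuousOn_const (fun _ _ => hasDerivWithinAt_const _ _ _) ha
    (fun y => (hv y).hasDerivAt) (fun y hy hyM => hpos y hy.1 hyM.symm) ⟨hx, le_rfl⟩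

theorem not_bddAbove_range_of_le_deriv {u : ℝ → ℝ} {a M : ℝ} (hu : Differentiable ℝ u)
    (hM : 0 < M) (hderiv : ∀ x, a ≤ x → M ≤ deriv u x) : ¬BddAbove (range u) := by
  have hlinear : ∀ x, a ≤ x → M * (x - a) + u a ≤ u x := fun x hx => by
    have := (convex_Ici a).mul_sub_le_image_sub_of_le_deriv hu.continuous.continuousOn
      hu.differentiableOn (fun y hy => hderiv y (interior_subset hy)) a self_mem_Ici x hx hx
    linarith
  have hlinear_tendsto : Tendsto (fun x => M * (x - a) + u a) atTop atTop :=
    tendsto_atTop_add_const_right _ _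
      ((tendsto_atTop_add_const_right _ _ tendsto_id).const_mul_atTop hM)
  refine not_bddAbove_of_tendsto_atTop (tendsto_atTop_mono' _ ?_ hlinear_tendsto)
  filter_upwards [Ici_mem_atTop a] with x hx using hlinear x hx

section Riccati

variable {u : ℝ → ℝ} {α β : ℝ}

theorem mul_sq_deriv_le_of_riccati_of_nonneg (hβ : 0 ≤ β) (hu : Differentiable ℝ u)
    (hu' : Differentiable ℝ (deriv u)) (hbdd : BddAbove (range u))
    (hineq : ∀ t, α * deriv u t ^ 2 - β ≤ deriv (deriv u) t) {t : ℝ} (ht : 0 ≤ deriv u t) :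
    α * deriv u t ^ 2 ≤ β := by
  by_contra! hlt
  have hpos : 0 < deriv u t := ht.lt_of_ne fun h => by simp [← h] at hlt; linarith
  refine not_bddAbove_range_of_le_deriv (a := t) hu hpos (fun x hx => ?_) hbdd
  exact le_of_deriv_pos_of_eq hu' le_rfl
    (fun y _ hy => by linarith [hineq y, hy ▸ hlt]) hx

theorem deriv_fun_comp_neg : deriv (fun s => u (-s)) = fun s => -deriv u (-s) :=
  funext (deriv_comp_neg u)

theorem deriv_deriv_comp_neg (x : ℝ) :
    deriv (deriv fun s => u (-s)) x = deriv (deriv u) (-x) := by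
  rw [deriv_fun_comp_neg, deriv.fun_neg, deriv_comp_neg, neg_neg]

theorem mul_sq_deriv_le_of_riccati (hβ : 0 ≤ β) (hu : Differentiable ℝ u)
    (hu' : Differentiable ℝ (deriv u)) (hbdd : BddAbove (range u))
    (hineq : ∀ t, α * deriv u t ^ 2 - β ≤ deriv (deriv u) t) (t : ℝ) :
    α * deriv u t ^ 2 ≤ β := by
  rcases le_total 0 (deriv u t) with ht | ht
  · exact mul_sq_deriv_le_of_riccati_of_nonneg hβ hu hu' hbdd hineq ht
  have hderiv := deriv_fun_comp_neg (u := u)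
  have := mul_sq_deriv_le_of_riccati_of_nonneg (u := fun s => u (-s)) (t := -t) hβ
    (hu.comp differentiable_neg) (hderiv ▸ (hu'.comp differentiable_neg).neg)
    (hbdd.mono (range_comp_subset_range _ u))
    (fun s => by rw [deriv_deriv_comp_neg, hderiv, neg_sq]; exact hineq (-s)) (by simpa [hderiv])
  simpa [hderiv] using this

end Riccati

/-- Let `λ, r₀, r₂` be positive reals and `u : ℝ → ℝ` twice differentiable.
If `sup u < ∞` and `u''(t) ≥ (λ/r₀²)·u'(t)² − r₀·r₂` for all `t`, then
`u'(t)² ≤ r₀³·r₂/λ` for all `t`. -/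
theorem landau_hadamard_core (lam r₀ r₂ : ℝ) (hlam : 0 < lam) (hr₀ : 0 < r₀) (hr₂ : 0 < r₂)
    (u : ℝ → ℝ) (hu : Differentiable ℝ u) (hu' : Differentiable ℝ (deriv u))
    (hbdd : BddAbove (Set.range u))
    (hineq : ∀ t : ℝ, (lam / r₀ ^ 2) * (deriv u t) ^ 2 - r₀ * r₂ ≤ deriv (deriv u) t) :
    ∀ t : ℝ, (deriv u t) ^ 2 ≤ r₀ ^ 3 * r₂ / lam := by
  intro t
  have h := mul_sq_deriv_le_of_riccati (by positivity) hu hu' hbdd hineq t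
  rw [div_mul_eq_mul_div, div_le_iff₀ (by positivity)] at h
  rw [le_div_iff₀ hlam]
  linarith
end

section
/- Let λ, r₀, r₂ be positive real numbers, let u : ℝ → ℝ be twice differentiable with v := u' satisfying v'(t) ≥ (λ/r₀²)·v(t)² − r₀·r₂ for all t ∈ ℝ. If there exists t₀ ∈ ℝ with v(t₀) > √(r₀³·r₂/λ), then v is nondecreasing on [t₀, ∞), v'(t) ≥ (λ/r₀²)·v(t₀)² − r₀·r₂ > 0 for all t ≥ t₀, and consequently u(t) → +∞ as t → +∞. -/
/-!
Above the threshold `√(r₀³r₂/λ)` the right-hand side `(λ/r₀²)v² − r₀r₂` of the Riccati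
inequality is positive, so `v` can never come back down to a level it has left: at any point
where `v` returns to a value above the threshold its derivative is positive. Hence `v` is
nondecreasing after `t₀`, `u' = v ≥ v(t₀) > 0` there, and `u` grows at least linearly.
-/

open Filter Set

theorem le_of_deriv_pos_of_eq_s1 {f : ℝ → ℝ} (hf : Differentiable ℝ f) {a b : ℝ} (hab : a ≤ b)
    (hpos : ∀ x ∈ Ico a b, f x = f a → 0 < deriv f x) : f a ≤ f b := by
  have hfence := image_le_of_deriv_right_lt_deriv_boundary (f := fun x => -f x)
    (f' := fun x => -deriv f x) (B := fun _ => -f a) (B' := fun _ => 0)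
    hf.neg.continuous.continuousOn
    (fun x _ => (hf x).hasDerivAt.neg.hasDerivWithinAt) le_rfl
    (fun _ => hasDerivAt_const _ _)
    (fun x hx hx_eq => neg_neg_of_pos (hpos x hx (neg_inj.mp hx_eq)))
  exact neg_le_neg_iff.mp (hfence ⟨hab, le_rfl⟩)

theorem monotoneOn_Ici_of_deriv_pos_of_lt {f : ℝ → ℝ} (hf : Differentiable ℝ f) {a c : ℝ}
    (hpos : ∀ x, c < f x → 0 < deriv f x) (ha : c < f a) : MonotoneOn f (Ici a) := by
  have stays_above : ∀ x, c < f x → ∀ y, x ≤ y → f x ≤ f y := fun x hx y hxy =>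
    le_of_deriv_pos_of_eq_s1 hf hxy fun z _ hz => hpos z (hz ▸ hx)
  exact fun x hx y _ hxy => stays_above x (ha.trans_le (stays_above a ha x hx)) y hxy

theorem tendsto_atTop_of_le_deriv {f : ℝ → ℝ} (hf : Differentiable ℝ f) {a k : ℝ} (hk : 0 < k)
    (hderiv : ∀ x ≥ a, k ≤ deriv f x) : Tendsto f atTop atTop := by
  have linear_growth : ∀ x ≥ a, k * (x - a) ≤ f x - f a :=
    fun x hx => (convex_Ici a).mul_sub_le_image_sub_of_le_deriv hf.continuous.continuousOn
      hf.differentiableOn (fun y hy => hderiv y (interior_subset hy)) a self_mem_Ici x hx hx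
  have hline : Tendsto (fun x => f a + k * (x - a)) atTop atTop :=
    tendsto_atTop_add_const_left _ _
      ((tendsto_atTop_add_const_right _ _ tendsto_id).const_mul_atTop hk)
  exact tendsto_atTop_mono' atTop
    (eventually_atTop.mpr ⟨a, fun x hx => by linarith [linear_growth x hx]⟩) hline

theorem riccati_rhs_pos {lam r₀ r₂ m : ℝ} (hlam : 0 < lam) (hr₀ : 0 < r₀)
    (hm : Real.sqrt (r₀ ^ 3 * r₂ / lam) < m) : 0 < lam / r₀ ^ 2 * m ^ 2 - r₀ * r₂ := by
  have hsq : r₀ ^ 3 * r₂ < m ^ 2 * lam := (div_lt_iff₀ hlam).mp (Real.lt_sq_of_sqrt_lt hm)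
  rw [div_mul_eq_mul_div, sub_pos, lt_div_iff₀ (pow_pos hr₀ 2)]
  nlinarith

theorem landau_hadamard_forward_blowup_general (lam r₀ r₂ : ℝ)
    (hlam : 0 < lam) (hr₀ : 0 < r₀)
    (u : ℝ → ℝ) (hu : Differentiable ℝ u) (hu' : Differentiable ℝ (deriv u))
    (v : ℝ → ℝ) (hv : v = deriv u)
    (hineq : ∀ t : ℝ, (lam / r₀ ^ 2) * (v t) ^ 2 - r₀ * r₂ ≤ deriv v t)
    (t₀ : ℝ) (ht₀ : Real.sqrt (r₀ ^ 3 * r₂ / lam) < v t₀) :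
    MonotoneOn v (Set.Ici t₀) ∧
      (∀ t ≥ t₀, (lam / r₀ ^ 2) * (v t₀) ^ 2 - r₀ * r₂ ≤ deriv v t) ∧
      0 < (lam / r₀ ^ 2) * (v t₀) ^ 2 - r₀ * r₂ ∧
      Tendsto u atTop atTop := by
  subst hv
  have hmono : MonotoneOn (deriv u) (Ici t₀) := monotoneOn_Ici_of_deriv_pos_of_lt hu'
    (fun t ht => (riccati_rhs_pos hlam hr₀ ht).trans_le (hineq t)) ht₀
  have hrhs_pos := riccati_rhs_pos hlam hr₀ ht₀
  have hv₀_pos : 0 < deriv u t₀ := (Real.sqrt_nonneg _).trans_lt ht₀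
  have hderiv_ge : ∀ t ≥ t₀, lam / r₀ ^ 2 * deriv u t₀ ^ 2 - r₀ * r₂ ≤ deriv (deriv u) t := by
    intro t ht
    have hv_le : deriv u t₀ ≤ deriv u t := hmono self_mem_Ici ht ht
    refine le_trans ?_ (hineq t)
    gcongr
  exact ⟨hmono, hderiv_ge, hrhs_pos,
    tendsto_atTop_of_le_deriv hu hv₀_pos fun t ht => hmono self_mem_Ici ht ht⟩

/-- Forward blow-up: if `v = u'` satisfies the Riccati differential inequality and
`v(t₀) > √(r₀³r₂/λ)`, then `v` is nondecreasing on `[t₀, ∞)`, with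
`v'(t) ≥ (λ/r₀²)·v(t₀)² − r₀·r₂ > 0` there, and `u(t) → +∞` as `t → +∞`. -/
theorem landau_hadamard_forward_blowup (lam r₀ r₂ : ℝ)
    (hlam : 0 < lam) (hr₀ : 0 < r₀) (hr₂ : 0 < r₂)
    (u : ℝ → ℝ) (hu : Differentiable ℝ u) (hu' : Differentiable ℝ (deriv u))
    (v : ℝ → ℝ) (hv : v = deriv u)
    (hineq : ∀ t : ℝ, (lam / r₀ ^ 2) * (v t) ^ 2 - r₀ * r₂ ≤ deriv v t)
    (t₀ : ℝ) (ht₀ : Real.sqrt (r₀ ^ 3 * r₂ / lam) < v t₀) :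
    MonotoneOn v (Set.Ici t₀) ∧
      (∀ t ≥ t₀, (lam / r₀ ^ 2) * (v t₀) ^ 2 - r₀ * r₂ ≤ deriv v t) ∧
      0 < (lam / r₀ ^ 2) * (v t₀) ^ 2 - r₀ * r₂ ∧
      Tendsto u atTop atTop :=
  landau_hadamard_forward_blowup_general lam r₀ r₂ hlam hr₀ u hu hu' v hv hineq t₀ ht₀
end

section
/- Let λ, r₀, r₂ be positive real numbers, let u : ℝ → ℝ be twice differentiable with v := u' satisfying v'(t) ≥ (λ/r₀²)·v(t)² − r₀·r₂ for all t ∈ ℝ. If there exists t₀ ∈ ℝ with v(t₀) < −√(r₀³·r₂/λ), then for all t ≤ t₀ one has v(t) ≤ v(t₀) < 0 and v(t) ≤ v(t₀) + [λ·v(t₀)²/r₀² − r₀·r₂]·(t − t₀), and consequently u(t) ≥ u(t₀) − v(t₀)·(t₀ − t) → +∞ as t → −∞. -/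
/-!
Put `c = λ v(t₀)² / r₀² - r₀ r₂`; it is positive because `v(t₀)² > r₀³ r₂ / λ`.
Wherever `v ≤ v(t₀) < 0` the Riccati inequality gives `v' ≥ c > 0`, so, running time backwards,
`v` can never climb back up to the level `v(t₀)`: hence `v ≤ v(t₀)` on `(-∞, t₀]`, and there
`v' ≥ c`. Integrating `v' ≥ c` and `u' = v ≤ v(t₀) < 0` over `[t, t₀]` gives the two linear bounds.
-/

open Filter Set

theorem image_le_of_right_le_of_deriv_pos_boundary {f : ℝ → ℝ} (hf : Differentiable ℝ f)
    {a b y : ℝ} (hb : f b ≤ y) (hpos : ∀ x ∈ Ioc a b, f x = y → 0 < deriv f x) :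
    ∀ ⦃x⦄, x ∈ Icc a b → f x ≤ y := by
  have hrefl : ∀ s, HasDerivAt (fun s => f (-s)) (-deriv f (-s)) s := fun s =>
    mul_neg_one (deriv f (-s)) ▸ (hf (-s)).hasDerivAt.comp s (hasDerivAt_neg s)
  intro x hx
  simpa using image_le_of_deriv_right_lt_deriv_boundary (a := -b) (b := -x)
    (fun s _ => (hrefl s).continuousAt.continuousWithinAt)
    (fun s _ => (hrefl s).hasDerivWithinAt) (by simpa using hb) (fun _ => hasDerivAt_const _ y)
    (fun s hs hfs =>
      neg_neg_of_pos (hpos (-s) ⟨by linarith [hs.2, hx.1], by linarith [hs.1]⟩ hfs))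
    (⟨neg_le_neg hx.2, le_rfl⟩ : -x ∈ Icc (-b) (-x))

theorem riccati_rate_pos {lam r₀ r₂ y : ℝ} (hlam : 0 < lam) (hr₀ : r₀ ≠ 0)
    (hy : y < -Real.sqrt (r₀ ^ 3 * r₂ / lam)) : 0 < lam * y ^ 2 / r₀ ^ 2 - r₀ * r₂ := by
  have hsqrt : Real.sqrt (r₀ ^ 3 * r₂ / lam) < -y := by linarith
  have hy_sq : r₀ ^ 3 * r₂ / lam < y ^ 2 := by
    simpa using (Real.sqrt_lt' (by linarith [Real.sqrt_nonneg (r₀ ^ 3 * r₂ / lam)])).1 hsqrt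
  rw [div_lt_iff₀ hlam] at hy_sq
  rw [sub_pos, lt_div_iff₀ (by positivity)]
  linarith

theorem riccati_rate_le_of_le_of_nonpos {lam r₀ r₂ y z : ℝ} (hlam : 0 ≤ lam) (hy : y ≤ 0)
    (hz : z ≤ y) : lam * y ^ 2 / r₀ ^ 2 - r₀ * r₂ ≤ lam / r₀ ^ 2 * z ^ 2 - r₀ * r₂ := by
  have hsq : y ^ 2 ≤ z ^ 2 := by nlinarith
  calc lam * y ^ 2 / r₀ ^ 2 - r₀ * r₂ = lam / r₀ ^ 2 * y ^ 2 - r₀ * r₂ := by ring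
    _ ≤ lam / r₀ ^ 2 * z ^ 2 - r₀ * r₂ := by gcongr

theorem landau_hadamard_backward_blowup_general (lam r₀ r₂ : ℝ)
    (hlam : 0 < lam) (hr₀ : 0 < r₀)
    (u : ℝ → ℝ) (hu : Differentiable ℝ u) (hu' : Differentiable ℝ (deriv u))
    (v : ℝ → ℝ) (hv : v = deriv u)
    (hineq : ∀ t : ℝ, (lam / r₀ ^ 2) * (v t) ^ 2 - r₀ * r₂ ≤ deriv v t)
    (t₀ : ℝ) (ht₀ : v t₀ < -Real.sqrt (r₀ ^ 3 * r₂ / lam)) :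
    (∀ t ≤ t₀, v t ≤ v t₀) ∧ v t₀ < 0 ∧
      (∀ t ≤ t₀, v t ≤ v t₀ + (lam * (v t₀) ^ 2 / r₀ ^ 2 - r₀ * r₂) * (t - t₀)) ∧
      (∀ t ≤ t₀, u t₀ - v t₀ * (t₀ - t) ≤ u t) ∧
      Tendsto (fun t => u t₀ - v t₀ * (t₀ - t)) atBot atTop := by
  have hv_diff : Differentiable ℝ v := hv ▸ hu'
  have hv₀ : v t₀ < 0 := ht₀.trans_le (neg_nonpos.2 (Real.sqrt_nonneg _))
  set c := lam * v t₀ ^ 2 / r₀ ^ 2 - r₀ * r₂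
  have hc : 0 < c := riccati_rate_pos hlam hr₀.ne' ht₀
  have hc_le : ∀ t, v t ≤ v t₀ → c ≤ deriv v t := fun t ht =>
    (riccati_rate_le_of_le_of_nonpos hlam.le hv₀.le ht).trans (hineq t)
  have hv_le : ∀ t ≤ t₀, v t ≤ v t₀ := fun t ht =>
    image_le_of_right_le_of_deriv_pos_boundary hv_diff le_rfl
      (fun s _ hs => hc.trans_le (hc_le s hs.le)) ⟨le_rfl, ht⟩
  have hv_lin : ∀ t ≤ t₀, c * (t₀ - t) ≤ v t₀ - v t := fun t ht =>
    (convex_Iic t₀).mul_sub_le_image_sub_of_le_deriv hv_diff.continuous.continuousOn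
      hv_diff.differentiableOn (fun s hs => hc_le s (hv_le s (mem_Iic.1 (interior_subset hs))))
      t ht t₀ self_mem_Iic ht
  have hu_lin : ∀ t ≤ t₀, u t₀ - u t ≤ v t₀ * (t₀ - t) := fun t ht =>
    (convex_Iic t₀).image_sub_le_mul_sub_of_deriv_le hu.continuous.continuousOn
      hu.differentiableOn
      (fun s hs => (congrFun hv s).ge.trans (hv_le s (mem_Iic.1 (interior_subset hs))))
      t ht t₀ self_mem_Iic ht
  refine ⟨hv_le, hv₀, fun t ht => by linarith [hv_lin t ht],
    fun t ht => by linarith [hu_lin t ht], ?_⟩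
  have hlin : Tendsto (fun t => u t₀ - v t₀ * t₀ + v t₀ * t) atBot atTop :=
    tendsto_atTop_add_const_left _ _ (tendsto_id.const_mul_atBot_of_neg hv₀)
  exact hlin.congr fun t => by ring

/-- Backward blow-up: if `v = u'` satisfies the Riccati differential inequality and
`v(t₀) < −√(r₀³r₂/λ)`, then for all `t ≤ t₀` one has `v(t) ≤ v(t₀) < 0` and
`v(t) ≤ v(t₀) + (λ·v(t₀)²/r₀² − r₀·r₂)·(t − t₀)`, and consequently
`u(t) ≥ u(t₀) − v(t₀)·(t₀ − t) → +∞` as `t → −∞`. -/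
theorem landau_hadamard_backward_blowup (lam r₀ r₂ : ℝ)
    (hlam : 0 < lam) (hr₀ : 0 < r₀) (hr₂ : 0 < r₂)
    (u : ℝ → ℝ) (hu : Differentiable ℝ u) (hu' : Differentiable ℝ (deriv u))
    (v : ℝ → ℝ) (hv : v = deriv u)
    (hineq : ∀ t : ℝ, (lam / r₀ ^ 2) * (v t) ^ 2 - r₀ * r₂ ≤ deriv v t)
    (t₀ : ℝ) (ht₀ : v t₀ < -Real.sqrt (r₀ ^ 3 * r₂ / lam)) :
    (∀ t ≤ t₀, v t ≤ v t₀) ∧ v t₀ < 0 ∧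
      (∀ t ≤ t₀, v t ≤ v t₀ + (lam * (v t₀) ^ 2 / r₀ ^ 2 - r₀ * r₂) * (t - t₀)) ∧
      (∀ t ≤ t₀, u t₀ - v t₀ * (t₀ - t) ≤ u t) ∧
      Tendsto (fun t => u t₀ - v t₀ * (t₀ - t)) atBot atTop :=
  landau_hadamard_backward_blowup_general lam r₀ r₂ hlam hr₀ u hu hu' v hv hineq t₀ ht₀
end

section
/- Let λ, r₂, z_ε > 0 and t₁ < t₂, and let z, v : ℝ → ℝ be differentiable functions such that on [t₁, t₂]: z(t) ≥ z_ε, |z'(t)| ≤ r₂, and v'(t) ≥ λ·(z(t)² − z_ε²); suppose moreover z(t₁) = z(t₂) = z_ε and (r₂/λ)·(v(t₂) − v(t₁)) ≤ 2·z_ε³. Then for every t ∈ [t₁, t₂] one has z(t)³/3 − z_ε²·z(t) + 2·z_ε³/3 ≤ z_ε³, and hence z(t) ≤ C·z_ε, where C = 2·cos(π/9) is the positive root of ζ³ − 3ζ − 1 = 0. -/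
/-!
Along the excursion, `t ↦ I(z t)` with `I(x) = x³/3 - z_ε² x + 2z_ε³/3` has derivative
`(z² - z_ε²) z'`, which is bounded in absolute value by `(r₂/λ) v'`. Since `I` vanishes at both
endpoints, comparing `I ∘ z` with `(r₂/λ) v` from `t₁` forwards and from `t₂` backwards gives
`2 I(z t) ≤ (r₂/λ)(v t₂ - v t₁) ≤ 2 z_ε³`. Finally `I(x) ≤ z_ε³` means `x³ - 3z_ε² x - z_ε³ ≤ 0`,
and `2 cos(π/9)` is the positive root of `ζ³ - 3ζ - 1` by the triple-angle formula.
-/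

open Set Real

theorem sub_le_sub_of_deriv_le {f g : ℝ → ℝ} {a b : ℝ} (hf : Differentiable ℝ f)
    (hg : Differentiable ℝ g) (hab : a ≤ b) (h : ∀ t ∈ Ioo a b, deriv f t ≤ deriv g t) :
    f b - f a ≤ g b - g a := by
  have hmono : MonotoneOn (g - f) (Icc a b) := by
    refine monotoneOn_of_deriv_nonneg (convex_Icc a b) (hg.sub hf).continuous.continuousOn
      (hg.sub hf).differentiableOn fun t ht => ?_
    rw [interior_Icc] at ht
    rw [deriv_sub (hg t) (hf t), sub_nonneg]
    exact h t ht
  have := hmono (left_mem_Icc.2 hab) (right_mem_Icc.2 hab) hab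
  simp only [Pi.sub_apply] at this
  linarith

theorem abs_sub_le_of_abs_deriv_le {f g : ℝ → ℝ} {a b : ℝ} (hf : Differentiable ℝ f)
    (hg : Differentiable ℝ g) (hab : a ≤ b) (h : ∀ t ∈ Ioo a b, |deriv f t| ≤ deriv g t) :
    |f b - f a| ≤ g b - g a := by
  refine abs_le.2 ⟨?_, sub_le_sub_of_deriv_le hf hg hab fun t ht => (le_abs_self _).trans (h t ht)⟩
  have := sub_le_sub_of_deriv_le hf.neg hg hab fun t ht => by
    rw [deriv.neg]
    exact (neg_le_abs _).trans (h t ht)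
  simp only [Pi.neg_apply] at this
  linarith

theorem two_mul_le_sub_of_abs_deriv_le {f g : ℝ → ℝ} {a b t : ℝ} (hf : Differentiable ℝ f)
    (hg : Differentiable ℝ g) (ha : f a = 0) (hb : f b = 0)
    (h : ∀ s ∈ Ioo a b, |deriv f s| ≤ deriv g s) (ht : t ∈ Icc a b) :
    2 * f t ≤ g b - g a := by
  have hleft := abs_sub_le_of_abs_deriv_le hf hg ht.1 fun s hs =>
    h s ⟨hs.1, hs.2.trans_le ht.2⟩
  have hright := abs_sub_le_of_abs_deriv_le hf hg ht.2 fun s hs =>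
    h s ⟨ht.1.trans_lt hs.1, hs.2⟩
  rw [ha] at hleft
  rw [hb] at hright
  linarith [le_abs_self (f t - 0), neg_abs_le (0 - f t)]

noncomputable def excursionPotential (a x : ℝ) : ℝ := x ^ 3 / 3 - a ^ 2 * x + 2 * a ^ 3 / 3

theorem excursionPotential_self (a : ℝ) : excursionPotential a a = 0 := by
  unfold excursionPotential; ring

theorem hasDerivAt_excursionPotential (a x : ℝ) :
    HasDerivAt (excursionPotential a) (x ^ 2 - a ^ 2) x := by
  have := (((hasDerivAt_pow 3 x).div_const 3).sub ((hasDerivAt_id x).const_mul (a ^ 2))).add_const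
    (2 * a ^ 3 / 3)
  exact this.congr_deriv (by simp)

theorem abs_deriv_excursionPotential_comp_le {z : ℝ → ℝ} {a r lam w t : ℝ}
    (hz : DifferentiableAt ℝ z t) (ha : 0 ≤ a) (hr : 0 ≤ r) (hlam : 0 < lam) (hzt : a ≤ z t)
    (hz' : |deriv z t| ≤ r) (hw : lam * (z t ^ 2 - a ^ 2) ≤ w) :
    |deriv (fun s => excursionPotential a (z s)) t| ≤ r / lam * w := by
  have hpos : 0 ≤ z t ^ 2 - a ^ 2 := by nlinarith
  have hderiv :
      HasDerivAt (fun s => excursionPotential a (z s)) ((z t ^ 2 - a ^ 2) * deriv z t) t :=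
    (hasDerivAt_excursionPotential a (z t)).comp t hz.hasDerivAt
  rw [hderiv.deriv, abs_mul, abs_of_nonneg hpos]
  calc (z t ^ 2 - a ^ 2) * |deriv z t| ≤ (z t ^ 2 - a ^ 2) * r :=
        mul_le_mul_of_nonneg_left hz' hpos
    _ = r / lam * (lam * (z t ^ 2 - a ^ 2)) := by field_simp
    _ ≤ r / lam * w := mul_le_mul_of_nonneg_left hw (by positivity)

theorem two_cos_pi_div_nine_cubic :
    (2 * cos (π / 9)) ^ 3 - 3 * (2 * cos (π / 9)) - 1 = 0 := by
  have h := cos_three_mul (π / 9)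
  rw [show 3 * (π / 9) = π / 3 by ring, cos_pi_div_three] at h
  linarith

theorem one_lt_two_cos_pi_div_nine : 1 < 2 * cos (π / 9) := by
  have := cos_lt_cos_of_nonneg_of_le_pi (by positivity) (by linarith [pi_pos])
    (show π / 9 < π / 3 by linarith [pi_pos])
  rw [cos_pi_div_three] at this
  linarith

theorem le_two_cos_pi_div_nine_mul {a x : ℝ} (ha : 0 ≤ a)
    (h : x ^ 3 - 3 * a ^ 2 * x - a ^ 3 ≤ 0) :
    x ≤ 2 * cos (π / 9) * a := by
  have hC := one_lt_two_cos_pi_div_nine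
  set C := 2 * cos (π / 9)
  by_contra! hx
  have hCa : 0 ≤ C * a := mul_nonneg (by linarith) ha
  have hfactor : x ^ 3 - 3 * a ^ 2 * x - a ^ 3
      = (x - C * a) * (x ^ 2 + C * a * x + (C ^ 2 - 3) * a ^ 2) := by
    linear_combination a ^ 3 * two_cos_pi_div_nine_cubic
  have hquad : 0 < x ^ 2 + C * a * x + (C ^ 2 - 3) * a ^ 2 := by
    nlinarith [pow_lt_pow_left₀ hx hCa two_ne_zero, mul_le_mul_of_nonneg_left hx.le hCa,
      mul_nonneg (sq_nonneg a) (sub_nonneg.2 (one_lt_pow₀ hC two_ne_zero).le)]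
  nlinarith [mul_pos (sub_pos.2 hx) hquad]

theorem excursion_estimate_general (lam r₂ zε : ℝ) (hlam : 0 < lam) (hr₂ : 0 < r₂) (hzε : 0 < zε)
    (t₁ t₂ : ℝ)
    (z v : ℝ → ℝ) (hz : Differentiable ℝ z) (hv : Differentiable ℝ v)
    (hzge : ∀ t ∈ Set.Icc t₁ t₂, zε ≤ z t)
    (hz' : ∀ t ∈ Set.Icc t₁ t₂, |deriv z t| ≤ r₂)
    (hv' : ∀ t ∈ Set.Icc t₁ t₂, lam * ((z t) ^ 2 - zε ^ 2) ≤ deriv v t)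
    (hz₁ : z t₁ = zε) (hz₂ : z t₂ = zε)
    (hvbound : (r₂ / lam) * (v t₂ - v t₁) ≤ 2 * zε ^ 3) :
    ∀ t ∈ Set.Icc t₁ t₂,
      (z t) ^ 3 / 3 - zε ^ 2 * z t + 2 * zε ^ 3 / 3 ≤ zε ^ 3 ∧
      z t ≤ (2 * Real.cos (Real.pi / 9)) * zε := by
  intro t ht
  have hI : Differentiable ℝ fun s => excursionPotential zε (z s) :=
    fun s => (hasDerivAt_excursionPotential zε (z s)).differentiableAt.comp s (hz s)
  have hexcursion := two_mul_le_sub_of_abs_deriv_le hI (hv.const_mul (r₂ / lam))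
    (by simp only [hz₁, excursionPotential_self]) (by simp only [hz₂, excursionPotential_self])
    (fun s hs => by
      rw [deriv_const_mul _ (hv s)]
      exact abs_deriv_excursionPotential_comp_le (hz s) hzε.le hr₂.le hlam
        (hzge s (Ioo_subset_Icc_self hs)) (hz' s (Ioo_subset_Icc_self hs))
        (hv' s (Ioo_subset_Icc_self hs)))
    ht
  have hle : excursionPotential zε (z t) ≤ zε ^ 3 := by linarith
  unfold excursionPotential at hle
  exact ⟨hle, le_two_cos_pi_div_nine_mul hzε.le (by linarith)⟩

/-- The excursion estimate: if on `[t₁, t₂]` one has `z ≥ z_ε`, `|z'| ≤ r₂` and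
`v' ≥ λ(z² − z_ε²)`, with `z(t₁) = z(t₂) = z_ε` and `(r₂/λ)(v(t₂) − v(t₁)) ≤ 2z_ε³`,
then `z(t)³/3 − z_ε²·z(t) + 2z_ε³/3 ≤ z_ε³` on `[t₁, t₂]`, whence
`z(t) ≤ C·z_ε` with `C = 2cos(π/9)` the positive root of `ζ³ − 3ζ − 1 = 0`. -/
theorem excursion_estimate (lam r₂ zε : ℝ) (hlam : 0 < lam) (hr₂ : 0 < r₂) (hzε : 0 < zε)
    (t₁ t₂ : ℝ) (h12 : t₁ < t₂)
    (z v : ℝ → ℝ) (hz : Differentiable ℝ z) (hv : Differentiable ℝ v)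
    (hzge : ∀ t ∈ Set.Icc t₁ t₂, zε ≤ z t)
    (hz' : ∀ t ∈ Set.Icc t₁ t₂, |deriv z t| ≤ r₂)
    (hv' : ∀ t ∈ Set.Icc t₁ t₂, lam * ((z t) ^ 2 - zε ^ 2) ≤ deriv v t)
    (hz₁ : z t₁ = zε) (hz₂ : z t₂ = zε)
    (hvbound : (r₂ / lam) * (v t₂ - v t₁) ≤ 2 * zε ^ 3) :
    ∀ t ∈ Set.Icc t₁ t₂,
      (z t) ^ 3 / 3 - zε ^ 2 * z t + 2 * zε ^ 3 / 3 ≤ zε ^ 3 ∧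
      z t ≤ (2 * Real.cos (Real.pi / 9)) * zε :=
  excursion_estimate_general lam r₂ zε hlam hr₂ hzε t₁ t₂ z v hz hv hzge hz' hv' hz₁ hz₂ hvbound
end

section
/- Let x : ℝ → ℝ³ be twice continuously differentiable with ‖x(t)‖ = 1 for all t ∈ ℝ, and let e ∈ ℝ³ with ‖e‖ = 1. Suppose λ := inf_{t∈ℝ} ⟨x(t), e⟩ > 0 and r₂ := sup_{t∈ℝ} ‖ẍ(t) + ‖ẋ(t)‖²·x(t)‖ < ∞. Then sup_{t∈ℝ} ‖ẋ(t)‖² ≤ (C²/λ)·(sup_{t∈ℝ} √(1 − ⟨e, x(t)⟩²))·r₂ ≤ (C²·√(1 − λ²)/λ)·r₂, where C = 2·cos(π/9) is the positive root of ζ³ − 3ζ − 1 = 0. -/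
open RealInnerProductSpace Real Set

/-! Write `g t = ⟪e, x t⟫`, `w = ‖ẋ t₀‖`, `S = sup √(1 - g²)` and `A = ∇_ẋ ẋ`. Since `A ⟂ x`,
only the component of `e` tangent to the sphere, of length `√(1 - g²) ≤ S`, sees `A`; with
`ẍ = A - ‖ẋ‖² x` this gives `g'' ≤ S r₂ - λ ‖ẋ‖²`. Since `d/dt ‖ẋ‖² = 2 ⟪ẋ, A⟫`, the speed is
`r₂`-Lipschitz, hence at least `w - r₂ s` at distance `s` from `t₀`. Comparing with the quartic
whose second derivative is this bound on `g''(t₀ + s) + g''(t₀ - s)`, at `T = w / r₂`, bounds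
`g(t₀ + T) + g(t₀ - T) - 2 g(t₀)` from above by `S w² / r₂ - λ w⁴ / (2 r₂²)`, and from below by
`-2 S²` because `1 - S² ≤ g ≤ 1`. The resulting quadratic inequality
`λ w⁴ ≤ 2 S r₂ w² + 4 (S r₂)²` gives `w² ≤ C² S r₂ / λ` as soon as `C² ≥ 1 + √5`, which
`C = 2 cos (π / 9)` satisfies. The case `r₂ = 0` follows by letting `r ↓ r₂` in the bound for
`r > 0`. -/

theorem sub_le_sub_of_deriv2_le {f f' f'' g g' g'' : ℝ → ℝ} {a b : ℝ} (hab : a ≤ b)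
    (hf : ∀ s, HasDerivAt f (f' s) s) (hf' : ∀ s, HasDerivAt f' (f'' s) s)
    (hg : ∀ s, HasDerivAt g (g' s) s) (hg' : ∀ s, HasDerivAt g' (g'' s) s)
    (ha : f' a ≤ g' a) (hle : ∀ s ∈ Icc a b, f'' s ≤ g'' s) :
    f b - f a ≤ g b - g a := by
  have hderiv_anti : AntitoneOn (fun s => f' s - g' s) (Icc a b) :=
    antitoneOn_of_hasDerivWithinAt_nonpos (convex_Icc a b)
      (fun s _ => ((hf' s).sub (hg' s)).continuousAt.continuousWithinAt)
      (fun s _ => ((hf' s).sub (hg' s)).hasDerivWithinAt)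
      (fun s hs => sub_nonpos.2 (hle s (interior_subset hs)))
  have hanti : AntitoneOn (fun s => f s - g s) (Icc a b) :=
    antitoneOn_of_hasDerivWithinAt_nonpos (convex_Icc a b)
      (fun s _ => ((hf s).sub (hg s)).continuousAt.continuousWithinAt)
      (fun s _ => ((hf s).sub (hg s)).hasDerivWithinAt)
      (fun s hs => by
        have := hderiv_anti (left_mem_Icc.2 hab) (interior_subset hs) (interior_subset hs).1
        linarith)
  linarith [hanti (left_mem_Icc.2 hab) (right_mem_Icc.2 hab) hab]

theorem add_sub_two_mul_le_of_deriv2_le {f f' f'' g g' g'' : ℝ → ℝ} {t₀ T : ℝ} (hT : 0 ≤ T)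
    (hf : ∀ t, HasDerivAt f (f' t) t) (hf' : ∀ t, HasDerivAt f' (f'' t) t)
    (hg : ∀ s, HasDerivAt g (g' s) s) (hg' : ∀ s, HasDerivAt g' (g'' s) s) (hg'0 : g' 0 = 0)
    (hle : ∀ s ∈ Icc 0 T, f'' (t₀ + s) + f'' (t₀ - s) ≤ g'' s) :
    f (t₀ + T) + f (t₀ - T) - 2 * f t₀ ≤ g T - g 0 := by
  have hsym : ∀ {φ φ' : ℝ → ℝ}, (∀ t, HasDerivAt φ (φ' t) t) →
      ∀ s, HasDerivAt (fun s => φ (t₀ + s)) (φ' (t₀ + s)) s ∧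
        HasDerivAt (fun s => φ (t₀ - s)) (-φ' (t₀ - s)) s :=
    fun hφ s => ⟨(hφ _).comp_const_add t₀ s, (hφ _).comp_const_sub t₀ s⟩
  have key := sub_le_sub_of_deriv2_le (f := fun s => f (t₀ + s) + f (t₀ - s))
    (f' := fun s => f' (t₀ + s) - f' (t₀ - s)) (f'' := fun s => f'' (t₀ + s) + f'' (t₀ - s))
    hT (fun s => ((hsym hf s).1.add (hsym hf s).2).congr_deriv (sub_eq_add_neg _ _).symm)
    (fun s => ((hsym hf' s).1.sub (hsym hf' s).2).congr_deriv (sub_neg_eq_add _ _))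
    hg hg' (by simp [hg'0]) hle
  simp only [add_zero, sub_zero] at key
  linarith

theorem norm_sub_norm_le_of_abs_inner_deriv_le {E : Type*} [NormedAddCommGroup E]
    [InnerProductSpace ℝ E] {v v' : ℝ → E} {K : ℝ} (hK : 0 ≤ K)
    (hv : ∀ t, HasDerivAt v (v' t) t) (hvv' : ∀ t, |⟪v t, v' t⟫| ≤ K * ‖v t‖) (p q : ℝ) :
    ‖v p‖ - ‖v q‖ ≤ K * |p - q| := by
  refine le_of_forall_pos_le_add fun ε hε => ?_
  -- `‖v‖` need not be differentiable where `v` vanishes; smooth it to `√(‖v‖² + ε²)`.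
  set f : ℝ → ℝ := fun t => √(‖v t‖ ^ 2 + ε ^ 2) with hf_def
  have hnorm_lt : ∀ t, ‖v t‖ < f t := fun t =>
    Real.lt_sqrt_of_sq_lt (by nlinarith)
  have hf : ∀ t, HasDerivAt f (⟪v t, v' t⟫ / f t) t := fun t =>
    (((hv t).norm_sq.add_const _).sqrt (by positivity)).congr_deriv (by
      rw [hf_def]; field_simp)
  have hf_bound : ∀ t, ‖⟪v t, v' t⟫ / f t‖ ≤ K := fun t => by
    have hpos : 0 < f t := (norm_nonneg _).trans_lt (hnorm_lt t)
    rw [Real.norm_eq_abs, abs_div, abs_of_pos hpos, div_le_iff₀ hpos]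
    exact (hvv' t).trans (mul_le_mul_of_nonneg_left (hnorm_lt t).le hK)
  have hmvt := convex_univ.norm_image_sub_le_of_norm_hasDerivWithin_le
    (fun t _ => (hf t).hasDerivWithinAt) (fun t _ => hf_bound t) (mem_univ q) (mem_univ p)
  have hfq : f q ≤ ‖v q‖ + ε := sqrt_le_iff.2
    ⟨by positivity, by nlinarith [norm_nonneg (v q)]⟩
  rw [Real.norm_eq_abs, Real.norm_eq_abs] at hmvt
  linarith [hnorm_lt p, (abs_le.1 hmvt).2]

theorem hasDerivAt_cubic (a b c s : ℝ) :
    HasDerivAt (fun s => a * s + b * s ^ 2 + c * s ^ 3) (a + 2 * b * s + 3 * c * s ^ 2) s :=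
  ((((hasDerivAt_id' s).const_mul a).add ((hasDerivAt_pow 2 s).const_mul b)).add
    ((hasDerivAt_pow 3 s).const_mul c)).congr_deriv (by norm_num; ring)

theorem hasDerivAt_quartic (a b c s : ℝ) :
    HasDerivAt (fun s => a * s ^ 2 + b * s ^ 3 + c * s ^ 4)
      (2 * a * s + 3 * b * s ^ 2 + 4 * c * s ^ 3) s :=
  ((((hasDerivAt_pow 2 s).const_mul a).add ((hasDerivAt_pow 3 s).const_mul b)).add
    ((hasDerivAt_pow 4 s).const_mul c)).congr_deriv (by norm_num; ring)

theorem le_div_mul_of_mul_sq_le {κ l P X : ℝ} (hκ : 2 * κ + 4 ≤ κ ^ 2) (hκ0 : 0 ≤ κ)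
    (hl : 0 < l) (hl1 : l ≤ 1) (hP : 0 ≤ P) (h : l * X ^ 2 ≤ 2 * P * X + 4 * P ^ 2) :
    X ≤ κ / l * P := by
  rw [div_mul_eq_mul_div, le_div_iff₀ hl]
  have hκ2 : 2 < κ := by nlinarith
  have hY : (X * l) ^ 2 ≤ 2 * P * (X * l) + 4 * P ^ 2 := by
    nlinarith [mul_le_mul_of_nonneg_left h hl.le, mul_le_mul_of_nonneg_left hl1 (sq_nonneg P)]
  by_contra! hlt
  nlinarith [mul_pos (sub_pos.2 hlt) (by nlinarith : 0 < X * l + (κ - 2) * P)]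

theorem seven_div_two_le_sq_two_mul_cos_pi_div_nine : 7 / 2 ≤ (2 * cos (π / 9)) ^ 2 := by
  have hcos := one_sub_sq_div_two_le_cos (x := π / 9)
  have hpi : π / 9 < 0.35 := by linarith [pi_lt_d2]
  have hcos_ge : 0.938 ≤ cos (π / 9) := by nlinarith [pi_pos]
  nlinarith

section SphereCurve

variable {E : Type*} [NormedAddCommGroup E] [InnerProductSpace ℝ E] {x : ℝ → E} {e : E}

noncomputable def covariantAccel (x : ℝ → E) (t : ℝ) : E :=
  deriv (deriv x) t + ‖deriv x t‖ ^ 2 • x t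

theorem abs_inner_le_one_of_norm_eq_one {y : E} (he : ‖e‖ = 1) (hy : ‖y‖ = 1) : |⟪e, y⟫| ≤ 1 := by
  simpa [he, hy] using abs_real_inner_le_norm e y

theorem abs_inner_le_sqrt_mul_norm_of_inner_eq_zero {y u : E} (he : ‖e‖ = 1) (hy : ‖y‖ = 1)
    (hyu : ⟪y, u⟫ = 0) : |⟪e, u⟫| ≤ √(1 - ⟪e, y⟫ ^ 2) * ‖u‖ := by
  have hproj : ⟪e, u⟫ = ⟪e - ⟪e, y⟫ • y, u⟫ := by
    rw [inner_sub_left, real_inner_smul_left, hyu, mul_zero, sub_zero]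
  have hnorm : ‖e - ⟪e, y⟫ • y‖ = √(1 - ⟪e, y⟫ ^ 2) := by
    rw [← Real.sqrt_sq (norm_nonneg _), norm_sub_sq_real, real_inner_smul_right, norm_smul, he,
      hy, Real.norm_eq_abs, mul_one, sq_abs]
    ring_nf
  rw [hproj, ← hnorm]
  exact abs_real_inner_le_norm _ _

theorem inner_deriv_eq_zero_of_norm_eq_one (hx : Differentiable ℝ x) (hunit : ∀ t, ‖x t‖ = 1)
    (t : ℝ) : ⟪x t, deriv x t⟫ = 0 := by
  have h := (hx t).hasDerivAt.norm_sq
  rw [show (‖x ·‖ ^ 2) = fun _ => (1 : ℝ) from funext fun s => by simp [hunit]] at h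
  linarith [h.unique (hasDerivAt_const t 1)]

theorem inner_covariantAccel_eq_zero (hx : Differentiable ℝ x) (hx' : Differentiable ℝ (deriv x))
    (hunit : ∀ t, ‖x t‖ = 1) (t : ℝ) : ⟪x t, covariantAccel x t⟫ = 0 := by
  have h := (hx t).hasDerivAt.inner ℝ (hx' t).hasDerivAt
  rw [show (fun s => ⟪x s, deriv x s⟫) = fun _ => 0 from
    funext (inner_deriv_eq_zero_of_norm_eq_one hx hunit)] at h
  have := h.unique (hasDerivAt_const t 0)
  rw [covariantAccel, inner_add_right, real_inner_smul_right, real_inner_self_eq_norm_sq, hunit]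
  rw [real_inner_self_eq_norm_sq] at this
  linarith

theorem inner_deriv_covariantAccel (hx : Differentiable ℝ x) (hunit : ∀ t, ‖x t‖ = 1) (t : ℝ) :
    ⟪deriv x t, covariantAccel x t⟫ = ⟪deriv x t, deriv (deriv x) t⟫ := by
  rw [covariantAccel, inner_add_right, real_inner_smul_right, real_inner_comm (x t),
    inner_deriv_eq_zero_of_norm_eq_one hx hunit, mul_zero, add_zero]

theorem norm_deriv_sub_norm_deriv_le (hx : Differentiable ℝ x) (hx' : Differentiable ℝ (deriv x))
    (hunit : ∀ t, ‖x t‖ = 1) {r : ℝ} (hr : ∀ t, ‖covariantAccel x t‖ ≤ r) (p q : ℝ) :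
    ‖deriv x p‖ - ‖deriv x q‖ ≤ r * |p - q| :=
  norm_sub_norm_le_of_abs_inner_deriv_le ((norm_nonneg _).trans (hr 0))
    (fun t => (hx' t).hasDerivAt) (fun t => by
      rw [← inner_deriv_covariantAccel hx hunit, mul_comm]
      exact (abs_real_inner_le_norm _ _).trans (mul_le_mul_of_nonneg_left (hr t) (norm_nonneg _)))
    p q

theorem inner_deriv_deriv_le (hx : Differentiable ℝ x) (hx' : Differentiable ℝ (deriv x))
    (hunit : ∀ t, ‖x t‖ = 1) (he : ‖e‖ = 1) {lam S r : ℝ} (hlam : ∀ t, lam ≤ ⟪e, x t⟫)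
    (hS : ∀ t, √(1 - ⟪e, x t⟫ ^ 2) ≤ S) (hr : ∀ t, ‖covariantAccel x t‖ ≤ r) (t : ℝ) :
    ⟪e, deriv (deriv x) t⟫ ≤ S * r - lam * ‖deriv x t‖ ^ 2 := by
  have hsplit : ⟪e, covariantAccel x t⟫ = ⟪e, deriv (deriv x) t⟫ + ‖deriv x t‖ ^ 2 * ⟪e, x t⟫ := by
    rw [covariantAccel, inner_add_right, real_inner_smul_right]
  have htangential : |⟪e, covariantAccel x t⟫| ≤ S * r :=
    (abs_inner_le_sqrt_mul_norm_of_inner_eq_zero he (hunit t)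
      (inner_covariantAccel_eq_zero hx hx' hunit t)).trans
      (mul_le_mul (hS t) (hr t) (norm_nonneg _) ((Real.sqrt_nonneg _).trans (hS t)))
  nlinarith [(abs_le.1 htangential).2, mul_le_mul_of_nonneg_right (hlam t) (sq_nonneg ‖deriv x t‖)]

theorem inner_add_inner_sub_two_mul_inner_le (hx : Differentiable ℝ x)
    (hx' : Differentiable ℝ (deriv x)) (hunit : ∀ t, ‖x t‖ = 1) (he : ‖e‖ = 1) {lam S r : ℝ}
    (hlam0 : 0 ≤ lam) (hlam : ∀ t, lam ≤ ⟪e, x t⟫) (hS : ∀ t, √(1 - ⟪e, x t⟫ ^ 2) ≤ S)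
    (hr : ∀ t, ‖covariantAccel x t‖ ≤ r) {t₀ T : ℝ} (hT : 0 ≤ T) (hTw : r * T ≤ ‖deriv x t₀‖) :
    ⟪e, x (t₀ + T)⟫ + ⟪e, x (t₀ - T)⟫ - 2 * ⟪e, x t₀⟫ ≤
      (S * r - lam * ‖deriv x t₀‖ ^ 2) * T ^ 2 + 2 / 3 * lam * ‖deriv x t₀‖ * r * T ^ 3
        - lam * r ^ 2 / 6 * T ^ 4 := by
  set w := ‖deriv x t₀‖
  -- The right side is `G T` for the quartic `G` with `G 0 = G' 0 = 0` and
  -- `G'' s = 2 (S r - lam (w - r s)²)`, the bound for the second difference at distance `s`.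
  have hside : ∀ s ∈ Icc 0 T, ∀ t, |t₀ - t| = s →
      ⟪e, deriv (deriv x) t⟫ ≤ S * r - lam * (w - r * s) ^ 2 := by
    intro s hs t hts
    have hspeed : w - r * s ≤ ‖deriv x t‖ := by
      linarith [hts ▸ norm_deriv_sub_norm_deriv_le hx hx' hunit hr t₀ t]
    have hpos : 0 ≤ w - r * s := by nlinarith [hs.2, (norm_nonneg _).trans (hr 0)]
    nlinarith [inner_deriv_deriv_le hx hx' hunit he hlam hS hr t,
      mul_le_mul_of_nonneg_left (pow_le_pow_left₀ hpos hspeed 2) hlam0]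
  have key := add_sub_two_mul_le_of_deriv2_le (f := fun t => ⟪e, x t⟫)
    (f' := fun t => ⟪e, deriv x t⟫) (f'' := fun t => ⟪e, deriv (deriv x) t⟫) (t₀ := t₀) hT
    (fun t => ((hasDerivAt_const t e).inner ℝ (hx t).hasDerivAt).congr_deriv (by simp))
    (fun t => ((hasDerivAt_const t e).inner ℝ (hx' t).hasDerivAt).congr_deriv (by simp))
    (hasDerivAt_quartic (S * r - lam * w ^ 2) (2 / 3 * lam * w * r) (-(lam * r ^ 2 / 6)))
    (hasDerivAt_cubic _ _ _) (by simp) (fun s hs => by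
      have hplus := hside s hs (t₀ + s) (by simp [abs_of_nonneg hs.1])
      have hminus := hside s hs (t₀ - s) (by simp [abs_of_nonneg hs.1])
      nlinarith)
  linarith

theorem sq_norm_deriv_le_of_pos (hx : Differentiable ℝ x) (hx' : Differentiable ℝ (deriv x))
    (hunit : ∀ t, ‖x t‖ = 1) (he : ‖e‖ = 1) {lam S r : ℝ} (hlam0 : 0 < lam)
    (hlam : ∀ t, lam ≤ ⟪e, x t⟫) (hS : ∀ t, √(1 - ⟪e, x t⟫ ^ 2) ≤ S)
    (hr : ∀ t, ‖covariantAccel x t‖ ≤ r) (hr0 : 0 < r) (t₀ : ℝ) :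
    ‖deriv x t₀‖ ^ 2 ≤ (2 * cos (π / 9)) ^ 2 / lam * S * r := by
  have hS0 : 0 ≤ S := (sqrt_nonneg _).trans (hS 0)
  have hle_one : ∀ t, ⟪e, x t⟫ ≤ 1 := fun t =>
    (abs_le.1 (abs_inner_le_one_of_norm_eq_one he (hunit t))).2
  have hlower : ∀ t, 1 - S ^ 2 ≤ ⟪e, x t⟫ := fun t => by
    nlinarith [(sqrt_le_left hS0).1 (hS t), hlam t, hle_one t]
  obtain ⟨T, hT0, hwT⟩ : ∃ T, 0 ≤ T ∧ ‖deriv x t₀‖ = r * T :=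
    ⟨‖deriv x t₀‖ / r, by positivity, by field_simp⟩
  have hdiff := inner_add_inner_sub_two_mul_inner_le hx hx' hunit he hlam0.le hlam hS hr hT0
    hwT.ge
  rw [hwT] at hdiff
  have hsecond : -(2 * S ^ 2) ≤ S * r * T ^ 2 - lam * r ^ 2 * T ^ 4 / 2 := by
    nlinarith [hlower (t₀ + T), hlower (t₀ - T), hle_one t₀]
  have hquad : lam * (‖deriv x t₀‖ ^ 2) ^ 2 ≤
      2 * (S * r) * ‖deriv x t₀‖ ^ 2 + 4 * (S * r) ^ 2 := by
    rw [hwT]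
    nlinarith [mul_le_mul_of_nonneg_left hsecond (sq_nonneg r)]
  have hC := seven_div_two_le_sq_two_mul_cos_pi_div_nine
  rw [mul_assoc]
  exact le_div_mul_of_mul_sq_le (by nlinarith) (by positivity) hlam0
    ((hlam t₀).trans (hle_one t₀)) (by positivity) hquad

theorem sq_norm_deriv_le (hx : Differentiable ℝ x) (hx' : Differentiable ℝ (deriv x))
    (hunit : ∀ t, ‖x t‖ = 1) (he : ‖e‖ = 1) {lam S r : ℝ} (hlam0 : 0 < lam)
    (hlam : ∀ t, lam ≤ ⟪e, x t⟫) (hS : ∀ t, √(1 - ⟪e, x t⟫ ^ 2) ≤ S)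
    (hr : ∀ t, ‖covariantAccel x t‖ ≤ r) (t₀ : ℝ) :
    ‖deriv x t₀‖ ^ 2 ≤ (2 * cos (π / 9)) ^ 2 / lam * S * r := by
  have hr0 : 0 ≤ r := (norm_nonneg _).trans (hr 0)
  refine ge_of_tendsto
    (((continuous_const_mul _).tendsto r).mono_left (nhdsWithin_le_nhds (s := Ioi r)))
    (eventually_nhdsWithin_of_forall fun r' hr' => ?_)
  exact sq_norm_deriv_le_of_pos hx hx' hunit he hlam0 hlam hS
    (fun t => (hr t).trans (le_of_lt hr')) (hr0.trans_lt hr') t₀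

end SphereCurve

/-- Landau–Hadamard type inequality for curves on the unit sphere `S² ⊂ ℝ³`
(Theorem 2 of the paper): if `λ = inf ⟨x(t), e⟩ > 0` and the covariant acceleration
`∇_ẋ ẋ = ẍ + ‖ẋ‖²x` has finite sup-norm `r₂`, then
`sup ‖ẋ‖² ≤ (C²/λ)·(sup √(1 − ⟨e,x⟩²))·r₂ ≤ (C²·√(1 − λ²)/λ)·r₂`,
where `C = 2cos(π/9)` is the positive root of `ζ³ − 3ζ − 1 = 0`. -/
theorem landau_hadamard_sphere (x : ℝ → EuclideanSpace ℝ (Fin 3))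
    (hx : ContDiff ℝ 2 x) (hunit : ∀ t : ℝ, ‖x t‖ = 1)
    (e : EuclideanSpace ℝ (Fin 3)) (he : ‖e‖ = 1)
    (lam : ℝ) (hlam : lam = ⨅ t : ℝ, ⟪x t, e⟫) (hlampos : 0 < lam)
    (r₂ : ℝ) (hr₂ : r₂ = ⨆ t : ℝ, ‖deriv (deriv x) t + ‖deriv x t‖ ^ 2 • x t‖)
    (hr₂bdd : BddAbove (Set.range fun t => ‖deriv (deriv x) t + ‖deriv x t‖ ^ 2 • x t‖)) :
    (∀ t : ℝ, ‖deriv x t‖ ^ 2 ≤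
        ((2 * Real.cos (Real.pi / 9)) ^ 2 / lam) *
          (⨆ s : ℝ, Real.sqrt (1 - ⟪e, x s⟫ ^ 2)) * r₂) ∧
      ((2 * Real.cos (Real.pi / 9)) ^ 2 / lam) *
          (⨆ s : ℝ, Real.sqrt (1 - ⟪e, x s⟫ ^ 2)) * r₂ ≤
        ((2 * Real.cos (Real.pi / 9)) ^ 2 * Real.sqrt (1 - lam ^ 2) / lam) * r₂ := by
  have hlam_le : ∀ t, lam ≤ ⟪e, x t⟫ := fun t => by
    have hbdd : BddBelow (range fun t => ⟪x t, e⟫) := ⟨-1, by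
      rintro _ ⟨s, rfl⟩
      exact (abs_le.1 (abs_inner_le_one_of_norm_eq_one (hunit s) he)).1⟩
    rw [real_inner_comm, hlam]
    exact ciInf_le hbdd t
  have hS_le : ∀ t, √(1 - ⟪e, x t⟫ ^ 2) ≤ ⨆ s, √(1 - ⟪e, x s⟫ ^ 2) :=
    le_ciSup ⟨1, by rintro _ ⟨s, rfl⟩; exact sqrt_le_one.2 (by nlinarith [sq_nonneg ⟪e, x s⟫])⟩
  have hr : ∀ t, ‖covariantAccel x t‖ ≤ r₂ := fun t => hr₂ ▸ le_ciSup hr₂bdd t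
  refine ⟨sq_norm_deriv_le (hx.differentiable (by norm_num)) hx.differentiable_deriv_two hunit he
    hlampos hlam_le hS_le hr, ?_⟩
  have hS_le_sqrt : ⨆ s, √(1 - ⟪e, x s⟫ ^ 2) ≤ √(1 - lam ^ 2) :=
    ciSup_le fun t => sqrt_le_sqrt (by nlinarith [hlam_le t])
  have hr₂0 : 0 ≤ r₂ := (norm_nonneg _).trans (hr 0)
  calc _ ≤ (2 * cos (π / 9)) ^ 2 / lam * √(1 - lam ^ 2) * r₂ := by gcongr
    _ = _ := by ring
end

section
/- There exists a smooth curve x : ℝ → ℝ³ with ‖x(t)‖ = 1 for all t ∈ ℝ such that sup_{t∈ℝ} ‖ẍ(t) + ‖ẋ(t)‖²·x(t)‖ < ∞ while sup_{t∈ℝ} ‖ẋ(t)‖ = ∞. (For instance, x(t) = (cos(t²/2), sin(t²/2), 0) has covariant acceleration of constant norm 1 and speed |t|.) -/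
open Real

noncomputable def Xc (t : ℝ) : EuclideanSpace ℝ (Fin 3) :=
  (EuclideanSpace.equiv (Fin 3) ℝ).symm ![Real.cos (t^2/2), Real.sin (t^2/2), 0]

noncomputable def Vc (t : ℝ) : EuclideanSpace ℝ (Fin 3) :=
  (EuclideanSpace.equiv (Fin 3) ℝ).symm ![-Real.sin (t^2/2) * t, Real.cos (t^2/2) * t, 0]

noncomputable def Ac (t : ℝ) : EuclideanSpace ℝ (Fin 3) :=
  (EuclideanSpace.equiv (Fin 3) ℝ).symm
    ![-(Real.cos (t^2/2) * t) * t + -Real.sin (t^2/2), -Real.sin (t^2/2) * t * t + Real.cos (t^2/2), 0]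

lemma hg (t : ℝ) : HasDerivAt (fun t : ℝ => t^2/2) t t := by
  have := ((hasDerivAt_pow 2 t).div_const 2)
  simpa using this

lemma hXc (t : ℝ) : HasDerivAt Xc (Vc t) t := by
  have h : HasDerivAt (fun t : ℝ => (![Real.cos (t^2/2), Real.sin (t^2/2), 0] : Fin 3 → ℝ))
      ![-Real.sin (t^2/2) * t, Real.cos (t^2/2) * t, 0] t := by
    rw [hasDerivAt_pi]
    intro i
    fin_cases i
    · simpa using (hg t).cos
    · simpa using (hg t).sin
    · simpa using hasDerivAt_const t (0:ℝ)
  exact ((EuclideanSpace.equiv (Fin 3) ℝ).symm.hasFDerivAt.comp_hasDerivAt t h)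

lemma hVc (t : ℝ) : HasDerivAt Vc (Ac t) t := by
  have h : HasDerivAt (fun t : ℝ => (![-Real.sin (t^2/2) * t, Real.cos (t^2/2) * t, 0] : Fin 3 → ℝ))
      ![-(Real.cos (t^2/2) * t) * t + -Real.sin (t^2/2), -Real.sin (t^2/2) * t * t + Real.cos (t^2/2), 0] t := by
    rw [hasDerivAt_pi]
    intro i
    fin_cases i
    · simpa [mul_comm, neg_mul, Pi.mul_def, Pi.neg_def] using ((hg t).sin.neg.mul (hasDerivAt_id' t))
    · simpa [mul_comm, neg_mul, Pi.mul_def] using ((hg t).cos.mul (hasDerivAt_id' t))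
    · simpa using hasDerivAt_const t (0:ℝ)
  exact ((EuclideanSpace.equiv (Fin 3) ℝ).symm.hasFDerivAt.comp_hasDerivAt t h)


lemma normVc (t : ℝ) : ‖Vc t‖ = |t| := by
  simp [Vc, EuclideanSpace.norm_eq, Fin.sum_univ_three, Real.norm_eq_abs, sq_abs, mul_pow, ← abs_pow]
  rw [abs_of_nonneg (by positivity), abs_of_nonneg (by positivity),
    abs_of_nonneg (sq_nonneg (Real.cos (t^2/2))),
    show Real.sin (t^2/2)^2 * t^2 + Real.cos (t^2/2)^2 * t^2 = t^2 by
      nlinarith [Real.sin_sq_add_cos_sq (t^2/2)]]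
  exact Real.sqrt_sq_eq_abs t

lemma normCov (t : ℝ) : ‖Ac t + ‖Vc t‖ ^ 2 • Xc t‖ = 1 := by
  rw [normVc]
  have h0 : (Ac t + |t| ^ 2 • Xc t) =
      (EuclideanSpace.equiv (Fin 3) ℝ).symm ![-Real.sin (t^2/2), Real.cos (t^2/2), 0] := by
    apply PiLp.ext
    intro i
    have h1 : |t|^2 = t^2 := sq_abs t
    fin_cases i <;> simp [Ac, Xc, h1] <;> ring
  rw [h0]
  simp [EuclideanSpace.norm_eq, Fin.sum_univ_three, ← abs_pow, Real.norm_eq_abs, sq_abs]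
  rw [abs_of_nonneg (sq_nonneg (Real.sin (t^2/2))), abs_of_nonneg (sq_nonneg (Real.cos (t^2/2)))]
  exact Real.sin_sq_add_cos_sq _

lemma smoothXc : ContDiff ℝ (⊤ : ℕ∞) Xc := by
  apply ((EuclideanSpace.equiv (Fin 3) ℝ).symm.contDiff).comp
  rw [contDiff_pi]
  intro i
  fin_cases i
  · exact ((contDiff_id.pow 2).div_const 2).cos
  · exact ((contDiff_id.pow 2).div_const 2).sin
  · exact contDiff_const

/-- On the unit sphere `S² ⊂ ℝ³` there is a smooth curve with bounded covariant
acceleration `‖ẍ + ‖ẋ‖²x‖` but unbounded speed `‖ẋ‖` (e.g.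
`x(t) = (cos(t²/2), sin(t²/2), 0)`). -/
theorem exists_sphere_curve_bounded_covariant_accel_unbounded_speed :
    ∃ x : ℝ → EuclideanSpace ℝ (Fin 3),
      ContDiff ℝ (⊤ : ℕ∞) x ∧ (∀ t : ℝ, ‖x t‖ = 1) ∧
      BddAbove (Set.range fun t => ‖deriv (deriv x) t + ‖deriv x t‖ ^ 2 • x t‖) ∧
      ¬ BddAbove (Set.range fun t => ‖deriv x t‖) := by
  refine ⟨Xc, smoothXc, ?_, ?_, ?_⟩
  · intro t
    simp [Xc, EuclideanSpace.norm_eq, Fin.sum_univ_three]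
  · have hd : deriv Xc = Vc := funext fun t => (hXc t).deriv
    rw [hd, show deriv Vc = Ac from funext fun t => (hVc t).deriv]
    refine ⟨1, ?_⟩
    rintro y ⟨t, rfl⟩
    exact le_of_eq (normCov t)
  · have hd : deriv Xc = Vc := funext fun t => (hXc t).deriv
    rw [hd]
    intro ⟨M, hM⟩
    have h1 : ‖Vc (|M| + 1)‖ ≤ M := hM ⟨|M| + 1, rfl⟩
    rw [normVc] at h1
    have : |M| + 1 ≤ M := le_trans (le_abs_self _) h1
    have := abs_nonneg M
    linarith [le_abs_self M]
end
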